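/- Let i, j, k, l be integers with 0 < i < k ≤ j < l, and set r = k − i, c = l − j; assume r < c < k. Then the following identity holds in ℚ(t): P_j·P_{l−i}/(P_i·P_{j−i}·P_{k−i}·P_{l−k}) = P_{l−j}·P_{k+j−i}/(P_{k−i}·P_{l+i−j−k}·P_k·P_{j−i}) + Σ_{s=1}^{min(k−i, k−c)} [ P_{k−c}·P_{l−j}·P_{k+j−i−s}/(P_s·P_{k−c−s}·P_{k−i−s}·P_{l+i−j−k+s}·P_k·P_{j−i−s}) ] · t^{2s(c−r+s)}. -/

import Mathlib

open Polynomial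

/-- `hpoly α = 1 + t^2 + ⋯ + t^{2α}` for `α ≥ 0`. -/
noncomputable def hpoly (α : ℤ) : Polynomial ℚ :=
  ∑ m ∈ Finset.range (α.toNat + 1), X ^ (2 * m)

/-- `Ppoly 0 = 1` and `Ppoly α = hpoly 0 ⋯ hpoly (α-1)` for `α > 0`. -/
noncomputable def Ppoly (α : ℤ) : Polynomial ℚ :=
  ∏ m ∈ Finset.range α.toNat, hpoly (m : ℤ)

/-- The image of `hpoly α` in the field of rational functions `ℚ(t)`. -/
noncomputable def hQ (α : ℤ) : RatFunc ℚ :=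
  algebraMap (Polynomial ℚ) (RatFunc ℚ) (hpoly α)

/-- The image of `Ppoly α` in the field of rational functions `ℚ(t)`. -/
noncomputable def PQ (α : ℤ) : RatFunc ℚ :=
  algebraMap (Polynomial ℚ) (RatFunc ℚ) (Ppoly α)

/-- The variable `t` of `ℚ(t)`. -/
noncomputable def tQ : RatFunc ℚ := RatFunc.X

/-!
Put `q = t²`. Then `h_α = [α + 1]_q` and `P_α = [α]_q!`, so every quotient in the identity is a
product of Gaussian binomial coefficients `[a, b]`. With `n = k - i`, `m = j - i`, `C = l - j` and
`A = k - c` the identity becomes the `q`-Pfaff–Saalschütz summation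
  `∑_{s + u = n} [A, s] [C, u] [A+C+m-s, A+C] q^(s (C - u)) = [A+C+m-n, m] [m+C, n]`,
whose `s = 0` term is the first summand on the right and whose terms with `s > A` vanish.

The summation holds over every commutative semiring. Both sides satisfy the same three-term
recursion in `(C, m, n)`, which comes from the two `q`-Pascal rules, and they agree when `C`, `m`
or `n` is zero; these base cases reduce to the symmetry `[a + b, a] = [a + b, b]` and to the
`q`-trinomial identity `[a + b + c, a + b] [a + b, a] = [a + c + b, a + c] [a + c, a]`. Both are
identities between polynomials in `q` with natural coefficients, and follow from
`[a + b, a] [a]! [b]! = [a + b]!` by cancelling factorials in the domain `ℕ[X]`.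
-/

open Finset

section QAnalogs

variable {R S : Type*} [CommSemiring R] [CommSemiring S] (q : R)

def qNat (n : ℕ) : R := ∑ j ∈ range n, q ^ j

def qFactorial (n : ℕ) : R := ∏ m ∈ range n, qNat q (m + 1)

def qChoose : ℕ → ℕ → R
  | _, 0 => 1
  | 0, _ + 1 => 0
  | n + 1, k + 1 => q ^ (k + 1) * qChoose n (k + 1) + qChoose n k

@[simp]
lemma qChoose_zero_right (n : ℕ) : qChoose q n 0 = 1 := by cases n <;> rfl

lemma qChoose_succ_succ (n k : ℕ) :
    qChoose q (n + 1) (k + 1) = q ^ (k + 1) * qChoose q n (k + 1) + qChoose q n k := rfl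

lemma qChoose_eq_zero_of_lt {n k : ℕ} (h : n < k) : qChoose q n k = 0 := by
  induction n generalizing k with
  | zero => obtain ⟨k, rfl⟩ := Nat.exists_eq_succ_of_ne_zero h.ne'; rfl
  | succ n ih =>
    obtain ⟨k, rfl⟩ := Nat.exists_eq_succ_of_ne_zero (by omega : k ≠ 0)
    rw [qChoose_succ_succ, ih (by omega), ih (by omega), mul_zero, add_zero]

@[simp]
lemma qChoose_self (n : ℕ) : qChoose q n n = 1 := by
  induction n with
  | zero => rfl
  | succ n ih => rw [qChoose_succ_succ, qChoose_eq_zero_of_lt q n.lt_succ_self, ih]; simp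

lemma qNat_add (a b : ℕ) : qNat q (a + b) = qNat q a + q ^ a * qNat q b := by
  simp only [qNat, sum_range_add, mul_sum, pow_add]

lemma qFactorial_succ (n : ℕ) : qFactorial q (n + 1) = qFactorial q n * qNat q (n + 1) :=
  prod_range_succ _ _

lemma qChoose_mul_qFactorial_mul_qFactorial (a b : ℕ) :
    qChoose q (a + b) a * qFactorial q a * qFactorial q b = qFactorial q (a + b) := by
  induction a generalizing b with
  | zero => simp [qFactorial]
  | succ a iha =>
    induction b with
    | zero => simp [qFactorial]
    | succ b ihb =>
      have hl : qChoose q (a + 1 + b) (a + 1) * qFactorial q (a + 1) * qFactorial q b =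
          qFactorial q (a + 1 + b) := ihb
      have hr : qChoose q (a + 1 + b) a * qFactorial q a * qFactorial q (b + 1) =
          qFactorial q (a + 1 + b) := by
        rw [show a + 1 + b = a + (b + 1) by omega]; exact iha (b + 1)
      calc qChoose q (a + 1 + (b + 1)) (a + 1) * qFactorial q (a + 1) * qFactorial q (b + 1)
          = q ^ (a + 1) * qNat q (b + 1) *
                (qChoose q (a + 1 + b) (a + 1) * qFactorial q (a + 1) * qFactorial q b) +
              qNat q (a + 1) *
                (qChoose q (a + 1 + b) a * qFactorial q a * qFactorial q (b + 1)) := by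
            rw [show a + 1 + (b + 1) = a + 1 + b + 1 by omega, qChoose_succ_succ,
              qFactorial_succ q a, qFactorial_succ q b]
            ring
        _ = qFactorial q (a + 1 + (b + 1)) := by
            rw [hl, hr, show a + 1 + (b + 1) = a + 1 + b + 1 by omega, qFactorial_succ,
              show a + 1 + b + 1 = a + 1 + (b + 1) by omega, qNat_add q (a + 1) (b + 1)]
            ring

lemma map_qNat (f : R →+* S) (n : ℕ) : f (qNat q n) = qNat (f q) n := by
  simp [qNat]

lemma map_qFactorial (f : R →+* S) (n : ℕ) : f (qFactorial q n) = qFactorial (f q) n := by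
  simp [qFactorial, map_qNat]

lemma map_qChoose (f : R →+* S) (n k : ℕ) : f (qChoose q n k) = qChoose (f q) n k := by
  induction n generalizing k with
  | zero => cases k <;> simp [qChoose]
  | succ n ih => cases k <;> simp [qChoose_succ_succ, ih]

lemma qFactorial_one (n : ℕ) : qFactorial (1 : R) n = n.factorial := by
  induction n with
  | zero => simp [qFactorial]
  | succ n ih => simp [qFactorial_succ, ih, qNat, Nat.factorial_succ, mul_comm]

lemma qFactorial_ne_zero_of_map_eq_one [CharZero S] {f : R →+* S} (hf : f q = 1) (n : ℕ) :
    qFactorial q n ≠ 0 := fun h => by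
  simpa [map_qFactorial, hf, qFactorial_one, Nat.factorial_ne_zero] using congrArg f h

lemma qFactorial_X_ne_zero (n : ℕ) : qFactorial (X : ℕ[X]) n ≠ 0 :=
  qFactorial_ne_zero_of_map_eq_one _ (f := evalRingHom 1) (eval_X (x := 1)) n

lemma eval₂RingHom_qChoose_X (n k : ℕ) :
    eval₂RingHom (Nat.castRingHom R) q (qChoose X n k) = qChoose q n k := by
  rw [map_qChoose, coe_eval₂RingHom, eval₂_X]

lemma qChoose_symm_add (a b : ℕ) : qChoose q (a + b) a = qChoose q (a + b) b := by
  have hX : qChoose (X : ℕ[X]) (a + b) a = qChoose X (a + b) b := by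
    refine mul_right_cancel₀ (mul_ne_zero (qFactorial_X_ne_zero a) (qFactorial_X_ne_zero b)) ?_
    rw [← mul_assoc, qChoose_mul_qFactorial_mul_qFactorial, mul_comm (qFactorial X a),
      ← mul_assoc, add_comm a b, qChoose_mul_qFactorial_mul_qFactorial]
  simpa only [eval₂RingHom_qChoose_X] using congrArg (eval₂RingHom (Nat.castRingHom R) q) hX

lemma qChoose_mul_qChoose_mul_qFactorials (a b c : ℕ) :
    qChoose q (a + b + c) (a + b) * qChoose q (a + b) a *
      (qFactorial q a * qFactorial q b * qFactorial q c) = qFactorial q (a + b + c) := by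
  rw [← qChoose_mul_qFactorial_mul_qFactorial q (a + b) c,
    ← qChoose_mul_qFactorial_mul_qFactorial q a b]
  ring

lemma qChoose_mul_qChoose_add_comm (a b c : ℕ) :
    qChoose q (a + b + c) (a + b) * qChoose q (a + b) a =
      qChoose q (a + c + b) (a + c) * qChoose q (a + c) a := by
  have hX : qChoose (X : ℕ[X]) (a + b + c) (a + b) * qChoose X (a + b) a =
      qChoose X (a + c + b) (a + c) * qChoose X (a + c) a := by
    refine mul_right_cancel₀ (mul_ne_zero (mul_ne_zero (qFactorial_X_ne_zero a)
      (qFactorial_X_ne_zero b)) (qFactorial_X_ne_zero c)) ?_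
    rw [qChoose_mul_qChoose_mul_qFactorials, mul_right_comm _ (qFactorial X b),
      qChoose_mul_qChoose_mul_qFactorials, Nat.add_right_comm]
  simpa only [map_mul, eval₂RingHom_qChoose_X] using
    congrArg (eval₂RingHom (Nat.castRingHom R) q) hX

lemma qChoose_succ_succ' (n k : ℕ) :
    qChoose q (n + 1) (k + 1) = qChoose q n (k + 1) + q ^ (n - k) * qChoose q n k := by
  rcases lt_or_ge n k with hnk | hkn
  · simp [qChoose_eq_zero_of_lt q hnk, qChoose_eq_zero_of_lt q (Nat.succ_lt_succ hnk),
      qChoose_eq_zero_of_lt q (hnk.trans k.lt_succ_self)]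
  obtain ⟨d, rfl⟩ := Nat.exists_eq_add_of_le hkn
  rw [Nat.add_sub_cancel_left]
  cases d with
  | zero => simp [qChoose_eq_zero_of_lt q k.lt_succ_self]
  | succ e =>
    rw [show k + (e + 1) + 1 = k + 1 + (e + 1) by omega, qChoose_symm_add,
      show k + 1 + (e + 1) = k + 1 + e + 1 by omega, qChoose_succ_succ,
      show k + (e + 1) = k + 1 + e by omega, ← qChoose_symm_add,
      show k + 1 + e = k + (e + 1) by omega,
      ← qChoose_symm_add, show k + (e + 1) = k + 1 + e by omega, add_comm]

-- The truncated subtractions `A - s`, `C - u` and `A + C + m - n` only occur in terms that vanish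
-- anyway: through `[A, s] = 0`, `[C, u] = 0`, and `qSaalschutzProd_eq_zero` respectively.
def qSaalschutzSum (A C m n : ℕ) : R :=
  ∑ p ∈ antidiagonal n,
    qChoose q A p.1 * qChoose q C p.2 * qChoose q (A - p.1 + C + m) (A + C) * q ^ (p.1 * (C - p.2))

def qSaalschutzProd (A C m n : ℕ) : R := qChoose q (A + C + m - n) m * qChoose q (m + C) n

lemma qSaalschutzSum_n_zero (A C m : ℕ) :
    qSaalschutzSum q A C m 0 = qSaalschutzProd q A C m 0 := by
  simp [qSaalschutzSum, qSaalschutzProd, ← qChoose_symm_add q (A + C) m]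

lemma qSaalschutzSum_m_zero (A C n : ℕ) :
    qSaalschutzSum q A C 0 n = qSaalschutzProd q A C 0 n := by
  rw [qSaalschutzSum, sum_eq_single_of_mem (0, n) (by simp)]
  · simp [qSaalschutzProd]
  rintro ⟨s, u⟩ hp hne
  have hs : 0 < s := by rw [HasAntidiagonal.mem_antidiagonal] at hp; grind
  rcases le_or_gt s A with hsA | hAs
  · rw [qChoose_eq_zero_of_lt q (by omega : A - s + C + 0 < A + C)]; simp
  · rw [qChoose_eq_zero_of_lt q hAs]; simp

lemma qSaalschutzSum_C_zero (A m n : ℕ) :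
    qSaalschutzSum q A 0 m n = qSaalschutzProd q A 0 m n := by
  rw [qSaalschutzSum, sum_eq_single_of_mem (n, 0) (by simp), qSaalschutzProd]
  swap
  · rintro ⟨s, u⟩ hp hne
    have hu : 0 < u := by rw [HasAntidiagonal.mem_antidiagonal] at hp; grind
    rw [qChoose_eq_zero_of_lt q hu]; simp
  simp only [qChoose_zero_right, mul_one, Nat.sub_zero, mul_zero, pow_zero, add_zero]
  rcases lt_or_ge m n with hmn | hnm
  · rw [qChoose_eq_zero_of_lt q hmn, mul_zero]
    rcases lt_or_ge A n with hAn | hnA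
    · rw [qChoose_eq_zero_of_lt q hAn, zero_mul]
    · rw [qChoose_eq_zero_of_lt q (by omega : A - n + m < A), mul_zero]
  rcases lt_or_ge A n with hAn | hnA
  · rw [qChoose_eq_zero_of_lt q hAn, qChoose_eq_zero_of_lt q (by omega : A + m - n < m)]; simp
  obtain ⟨c, rfl⟩ := Nat.exists_eq_add_of_le hnm
  obtain ⟨b, rfl⟩ := Nat.exists_eq_add_of_le hnA
  rw [show n + b - n + (n + c) = n + b + c by omega, show n + b + (n + c) - n = n + c + b by omega,
    mul_comm, qChoose_mul_qChoose_add_comm]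

lemma qChoose_succ_succ_mul_pow (C s u : ℕ) :
    qChoose q (C + 1) (u + 1) * q ^ (s * (C - u)) =
      q ^ (s + u + 1) * (qChoose q C (u + 1) * q ^ (s * (C - (u + 1)))) +
        qChoose q C u * q ^ (s * (C - u)) := by
  rw [qChoose_succ_succ]
  rcases lt_or_ge C (u + 1) with hC | hC
  · simp [qChoose_eq_zero_of_lt q hC]
  obtain ⟨d, rfl⟩ := Nat.exists_eq_add_of_le hC
  rw [Nat.add_sub_cancel_left, show u + 1 + d - u = d + 1 by omega]
  ring

lemma qSaalschutzSum_succ_succ_succ (A C m n : ℕ) :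
    qSaalschutzSum q A (C + 1) (m + 1) (n + 1) =
      q ^ (A + C + 1) * qSaalschutzSum q A (C + 1) m (n + 1) + qSaalschutzSum q A C (m + 1) n +
        q ^ (n + 1) * qSaalschutzSum q A C (m + 1) (n + 1) := by
  have pascal_in_m : qSaalschutzSum q A (C + 1) (m + 1) (n + 1) =
      q ^ (A + C + 1) * qSaalschutzSum q A (C + 1) m (n + 1) +
        ∑ p ∈ antidiagonal (n + 1), qChoose q A p.1 * qChoose q (C + 1) p.2 *
          qChoose q (A - p.1 + C + (m + 1)) (A + C) * q ^ (p.1 * (C + 1 - p.2)) := by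
    simp only [qSaalschutzSum, mul_sum, ← sum_add_distrib]
    refine sum_congr rfl fun p _ => ?_
    rw [show A - p.1 + (C + 1) + (m + 1) = A - p.1 + (C + 1) + m + 1 by omega,
      show A + (C + 1) = A + C + 1 by omega, qChoose_succ_succ,
      show A - p.1 + (C + 1) + m = A - p.1 + C + (m + 1) by omega]
    ring
  have pascal_in_C (s u : ℕ) (hsu : s + u = n) :
      qChoose q A s * qChoose q (C + 1) (u + 1) * qChoose q (A - s + C + (m + 1)) (A + C) *
          q ^ (s * (C + 1 - (u + 1))) =
        q ^ (n + 1) * (qChoose q A s * qChoose q C (u + 1) *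
          qChoose q (A - s + C + (m + 1)) (A + C) * q ^ (s * (C - (u + 1)))) +
        qChoose q A s * qChoose q C u * qChoose q (A - s + C + (m + 1)) (A + C) *
          q ^ (s * (C - u)) := by
    calc _ = qChoose q A s * qChoose q (A - s + C + (m + 1)) (A + C) *
            (qChoose q (C + 1) (u + 1) * q ^ (s * (C - u))) := by
          rw [Nat.add_sub_add_right]; ring
      _ = _ := by rw [qChoose_succ_succ_mul_pow, hsu]; ring
  have pascal_in_C_sum : ∑ p ∈ antidiagonal (n + 1), qChoose q A p.1 * qChoose q (C + 1) p.2 *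
          qChoose q (A - p.1 + C + (m + 1)) (A + C) * q ^ (p.1 * (C + 1 - p.2)) =
        qSaalschutzSum q A C (m + 1) n + q ^ (n + 1) * qSaalschutzSum q A C (m + 1) (n + 1) := by
    rw [Nat.sum_antidiagonal_succ', sum_congr rfl fun p hp =>
      pascal_in_C p.1 p.2 (HasAntidiagonal.mem_antidiagonal.mp hp), sum_add_distrib,
      qSaalschutzSum, qSaalschutzSum, Nat.sum_antidiagonal_succ', ← mul_sum]
    simp only [qChoose_zero_right, Nat.sub_zero]
    ring
  rw [pascal_in_m, pascal_in_C_sum, ← add_assoc]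

lemma qSaalschutzProd_eq_zero {A C n : ℕ} (h : A + C < n) (m : ℕ) :
    qSaalschutzProd q A C m n = 0 := by
  cases m with
  | zero => simp [qSaalschutzProd, qChoose_eq_zero_of_lt q (by omega : C < n)]
  | succ m =>
    simp [qSaalschutzProd, qChoose_eq_zero_of_lt q (by omega : A + C + (m + 1) - n < m + 1)]

lemma qSaalschutzProd_succ_succ_succ (A C m n : ℕ) :
    qSaalschutzProd q A (C + 1) (m + 1) (n + 1) =
      q ^ (A + C + 1) * qSaalschutzProd q A (C + 1) m (n + 1) + qSaalschutzProd q A C (m + 1) n +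
        q ^ (n + 1) * qSaalschutzProd q A C (m + 1) (n + 1) := by
  rcases lt_or_ge (A + C) n with hn | hn
  · simp [qSaalschutzProd_eq_zero q (by omega : A + (C + 1) < n + 1),
      qSaalschutzProd_eq_zero q hn, qSaalschutzProd_eq_zero q (by omega : A + C < n + 1)]
  obtain ⟨K, hK⟩ := Nat.exists_eq_add_of_le hn
  have pascal_left : q ^ (n + 1) * qChoose q (K + m + 1) (m + 1) =
      q ^ (A + C + 1) * qChoose q (K + m) m + q ^ (n + 1) * qChoose q (K + m) (m + 1) := by
    rw [qChoose_succ_succ', Nat.add_sub_cancel, hK]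
    ring
  calc qSaalschutzProd q A (C + 1) (m + 1) (n + 1)
      = q ^ (n + 1) * qChoose q (K + m + 1) (m + 1) * qChoose q (m + C + 1) (n + 1) +
          qChoose q (K + m + 1) (m + 1) * qChoose q (m + C + 1) n := by
        rw [qSaalschutzProd, show m + 1 + (C + 1) = m + C + 1 + 1 by omega, qChoose_succ_succ,
          show A + (C + 1) + (m + 1) - (n + 1) = K + m + 1 by omega]
        ring
    _ = _ := by
        rw [pascal_left, qSaalschutzProd, qSaalschutzProd, qSaalschutzProd,
          show A + C + (m + 1) - n = K + m + 1 by omega,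
          show A + (C + 1) + m - (n + 1) = K + m by omega,
          show A + C + (m + 1) - (n + 1) = K + m by omega,
          show m + (C + 1) = m + C + 1 by omega, show m + 1 + C = m + C + 1 by omega]
        ring

theorem qSaalschutzSum_eq_qSaalschutzProd (A C m n : ℕ) :
    qSaalschutzSum q A C m n = qSaalschutzProd q A C m n := by
  induction C generalizing m n with
  | zero => exact qSaalschutzSum_C_zero q A m n
  | succ C ihC =>
    induction m generalizing n with
    | zero => exact qSaalschutzSum_m_zero q A (C + 1) n
    | succ m ihm =>
      cases n with
      | zero => exact qSaalschutzSum_n_zero q A (C + 1) (m + 1)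
      | succ n =>
        rw [qSaalschutzSum_succ_succ_succ, qSaalschutzProd_succ_succ_succ, ihm, ihC, ihC]

lemma qSaalschutzSum_eq_add_sum_Icc {A C m n : ℕ} (hnC : n ≤ C) :
    qSaalschutzSum q A C m n = qChoose q C n * qChoose q (A + C + m) (A + C) +
      ∑ s ∈ Icc 1 (min n A), qChoose q A s * qChoose q C (n - s) *
        qChoose q (A + C + m - s) (A + C) * q ^ (s * (C - n + s)) := by
  rw [qSaalschutzSum, Nat.sum_antidiagonal_eq_sum_range_succ
      (fun s u => qChoose q A s * qChoose q C u * qChoose q (A - s + C + m) (A + C) *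
        q ^ (s * (C - u))),
    sum_range_eq_add_Ico _ n.succ_pos, Nat.succ_eq_add_one, Ico_add_one_right_eq_Icc]
  simp only [qChoose_zero_right, Nat.sub_zero, one_mul, Nat.zero_mul, pow_zero, mul_one]
  congr 1
  rw [← sum_subset (Icc_subset_Icc_right (min_le_left n A))]
  · refine sum_congr rfl fun s hs => ?_
    rw [mem_Icc] at hs
    rw [show A - s + C + m = A + C + m - s by omega, show C - (n - s) = C - n + s by omega]
  · intro s hs hsA
    rw [mem_Icc] at hs hsA
    rw [qChoose_eq_zero_of_lt q (by omega : A < s)]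
    simp

end QAnalogs

lemma sum_Icc_natCast {M : Type*} [AddCommMonoid M] (f : ℤ → M) (a b : ℕ) :
    ∑ s ∈ Icc (a : ℤ) b, f s = ∑ s ∈ Icc a b, f s := by
  have hmap : (Icc a b).map Nat.castEmbedding = Icc (a : ℤ) b := by
    ext x
    simp only [mem_Icc, mem_map, Nat.castEmbedding_apply]
    exact ⟨by rintro ⟨y, hy, rfl⟩; omega, fun hx => ⟨x.toNat, by omega, by omega⟩⟩
  rw [← hmap, sum_map]
  rfl

section Field

variable {K : Type*} [Field K] {q : K}

lemma qChoose_eq_div (hq : ∀ n, qFactorial q n ≠ 0) {n k : ℕ} (h : k ≤ n) :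
    qChoose q n k = qFactorial q n / (qFactorial q k * qFactorial q (n - k)) := by
  obtain ⟨d, rfl⟩ := Nat.exists_eq_add_of_le h
  rw [eq_div_iff (mul_ne_zero (hq k) (hq _)), Nat.add_sub_cancel_left, ← mul_assoc,
    qChoose_mul_qFactorial_mul_qFactorial]

theorem qSaalschutz_qFactorial (hq : ∀ n, qFactorial q n ≠ 0) {A C m n : ℕ} (hnC : n ≤ C)
    (hnm : n ≤ m) :
    qFactorial q (A + C - n + m) * qFactorial q (m + C) /
        (qFactorial q (A + C - n) * qFactorial q m * qFactorial q n * qFactorial q (m + C - n)) =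
      qFactorial q C * qFactorial q (A + C + m) /
          (qFactorial q n * qFactorial q (C - n) * qFactorial q (A + C) * qFactorial q m) +
        ∑ s ∈ Icc 1 (min n A), qFactorial q A * qFactorial q C * qFactorial q (A + C + m - s) /
          (qFactorial q s * qFactorial q (A - s) * qFactorial q (n - s) * qFactorial q (C - n + s) *
            qFactorial q (A + C) * qFactorial q (m - s)) * q ^ (s * (C - n + s)) := by
  have hprod : qSaalschutzProd q A C m n =
      qFactorial q (A + C - n + m) * qFactorial q (m + C) /
        (qFactorial q (A + C - n) * qFactorial q m * qFactorial q n *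
          qFactorial q (m + C - n)) := by
    rw [qSaalschutzProd, qChoose_eq_div hq (by omega), qChoose_eq_div hq (by omega),
      show A + C + m - n = A + C - n + m by omega, Nat.add_sub_cancel]
    ring
  rw [← hprod, ← qSaalschutzSum_eq_qSaalschutzProd, qSaalschutzSum_eq_add_sum_Icc q hnC]
  congr 1
  · rw [qChoose_eq_div hq hnC, qChoose_eq_div hq (by omega), show A + C + m - (A + C) = m by omega]
    ring
  · refine sum_congr rfl fun s hs => ?_
    rw [mem_Icc] at hs
    rw [qChoose_eq_div hq (by omega : s ≤ A), qChoose_eq_div hq (by omega : n - s ≤ C),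
      qChoose_eq_div hq (by omega : A + C ≤ A + C + m - s), show C - (n - s) = C - n + s by omega,
      show A + C + m - s - (A + C) = m - s by omega]
    ring

end Field

lemma pow_toNat_two_mul {M : Type*} [Monoid M] (t : M) (s d : ℕ) :
    t ^ (2 * (s : ℤ) * (d + s)).toNat = (t ^ 2) ^ (s * (d + s)) := by
  rw [← pow_mul,
    show 2 * (s : ℤ) * (d + s) = ((2 * (s * (d + s)) : ℕ) : ℤ) by push_cast; ring,
    Int.toNat_natCast]

lemma Ppoly_eq_qFactorial (α : ℤ) : Ppoly α = qFactorial (X ^ 2) α.toNat := by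
  simp [Ppoly, hpoly, qFactorial, qNat, pow_mul]

lemma PQ_eq_qFactorial (α : ℤ) : PQ α = qFactorial (tQ ^ 2) α.toNat := by
  rw [PQ, Ppoly_eq_qFactorial, map_qFactorial, map_pow, RatFunc.algebraMap_X, tQ]

lemma qFactorial_tQ_sq_ne_zero (n : ℕ) : qFactorial (tQ ^ 2) n ≠ 0 := by
  rw [tQ, ← RatFunc.algebraMap_X, ← map_pow, ← map_qFactorial]
  exact RatFunc.algebraMap_ne_zero
    (qFactorial_ne_zero_of_map_eq_one _ (f := evalRingHom (1 : ℚ)) (by simp) n)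

theorem global_polynomial_identity_general
    (i j k l r c : ℤ)
    (hik : i < k) (hkj : k ≤ j)
    (hr : r = k - i) (hc : c = l - j) (hrc : r < c) (hck : c < k) :
    PQ j * PQ (l - i) / (PQ i * PQ (j - i) * PQ (k - i) * PQ (l - k)) =
      PQ (l - j) * PQ (k + j - i) /
        (PQ (k - i) * PQ (l + i - j - k) * PQ k * PQ (j - i)) +
      ∑ s ∈ Finset.Icc 1 (min (k - i) (k - c)),
        PQ (k - c) * PQ (l - j) * PQ (k + j - i - s) /
          (PQ s * PQ (k - c - s) * PQ (k - i - s) * PQ (l + i - j - k + s) *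
            PQ k * PQ (j - i - s)) *
          tQ ^ (2 * s * (c - r + s)).toNat := by
  obtain ⟨A, hA⟩ : ∃ A : ℕ, (A : ℤ) = k - c := ⟨_, Int.toNat_of_nonneg (by omega)⟩
  obtain ⟨C, hC⟩ : ∃ C : ℕ, (C : ℤ) = c := ⟨_, Int.toNat_of_nonneg (by omega)⟩
  obtain ⟨m, hm⟩ : ∃ m : ℕ, (m : ℤ) = j - i := ⟨_, Int.toNat_of_nonneg (by omega)⟩
  obtain ⟨n, hn⟩ : ∃ n : ℕ, (n : ℤ) = r := ⟨_, Int.toNat_of_nonneg (by omega)⟩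
  rw [show min (k - i) (k - c) = ((min n A : ℕ) : ℤ) by omega, ← Nat.cast_one (R := ℤ),
    sum_Icc_natCast,
    show c - r = ((C - n : ℕ) : ℤ) by omega]
  simp only [PQ_eq_qFactorial, pow_toNat_two_mul]
  -- what is left are equalities such as `(k + j - i - s).toNat = A + C + m - s`
  convert qSaalschutz_qFactorial qFactorial_tQ_sq_ne_zero (A := A) (by omega : n ≤ C)
    (by omega : n ≤ m) <;> omega

/-- The global polynomial identity (Theorem 4.2). -/
theorem global_polynomial_identity
    (i j k l r c : ℤ)
    (hi : 0 < i) (hik : i < k) (hkj : k ≤ j) (hjl : j < l)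
    (hr : r = k - i) (hc : c = l - j) (hrc : r < c) (hck : c < k) :
    PQ j * PQ (l - i) / (PQ i * PQ (j - i) * PQ (k - i) * PQ (l - k)) =
      PQ (l - j) * PQ (k + j - i) /
        (PQ (k - i) * PQ (l + i - j - k) * PQ k * PQ (j - i)) +
      ∑ s ∈ Finset.Icc 1 (min (k - i) (k - c)),
        PQ (k - c) * PQ (l - j) * PQ (k + j - i - s) /
          (PQ s * PQ (k - c - s) * PQ (k - i - s) * PQ (l + i - j - k + s) *
            PQ k * PQ (j - i - s)) *
          tQ ^ (2 * s * (c - r + s)).toNat :=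
  global_polynomial_identity_general i j k l r c hik hkj hr hc hrc hck
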